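/- arXiv:2507.11698 — 4 statements merged into one kernel-verified Lean document; each statement's English description precedes it below -/
import Mathlib

section
/- If d = (d_1,...,d_n) is an increasing tuple of positive rationals lying in Mord and d' = (d'_1,...,d'_n) is a tuple of positive rationals with d' > d lexicographically, then there exists a ∈ ℕ^n with ∑_j a_j/d_j ≥ 1 but ∑_j a_j/d'_j < 1; that is, I_d is not contained in I_{d'}. -/
/-- `Mord`: increasing tuples of positive rationals such that for each `i` there exist
naturals `a₁,…,a_i` with `a_i ≠ 0` and `∑_{j≤i} a_j / d_j = 1`. -/
def Mord {n : ℕ} (d : Fin n → ℚ) : Prop :=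
  (∀ j, 0 < d j) ∧ Monotone d ∧
    ∀ i : Fin n, ∃ a : Fin n → ℕ, a i ≠ 0 ∧ (∀ j, i < j → a j = 0) ∧
      ∑ j, (a j : ℚ) / d j = 1

/-- Lexicographic strict order on tuples: `d < d'`. -/
def lexLt {n : ℕ} (d d' : Fin n → ℚ) : Prop :=
  ∃ k : Fin n, (∀ j, j < k → d j = d' j) ∧ d k < d' k

theorem sum_div_lt_sum_div_of_lastNonzero {n : ℕ} {d d' : Fin n → ℚ} {a : Fin n → ℕ} {k : Fin n}
    (hdk : 0 < d k) (heq : ∀ j, j < k → d j = d' j) (hk : d k < d' k) (hak : a k ≠ 0)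
    (hzero : ∀ j, k < j → a j = 0) :
    ∑ j, (a j : ℚ) / d' j < ∑ j, (a j : ℚ) / d j := by
  refine Finset.sum_lt_sum (fun j _ => ?_) ⟨k, Finset.mem_univ k, ?_⟩
  · rcases lt_trichotomy j k with h | rfl | h
    · rw [heq j h]
    · exact div_le_div_of_nonneg_left (Nat.cast_nonneg _) hdk hk.le
    · simp [hzero j h]
  · exact div_lt_div_of_pos_left (by exact_mod_cast Nat.pos_of_ne_zero hak) hdk hk

theorem Id_not_subset_of_mord_lexLt_general {n : ℕ} (d d' : Fin n → ℚ) (hd : Mord d)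
    (hlt : lexLt d d') :
    ∃ a : Fin n → ℕ, 1 ≤ ∑ j, (a j : ℚ) / d j ∧ ∑ j, (a j : ℚ) / d' j < 1 := by
  obtain ⟨k, heq, hk⟩ := hlt
  -- the `Mord` witness at the first index where `d` and `d'` differ
  obtain ⟨a, hak, hzero, hsum⟩ := hd.2.2 k
  refine ⟨a, hsum.ge, ?_⟩
  rw [← hsum]
  exact sum_div_lt_sum_div_of_lastNonzero (hd.1 k) heq hk hak hzero

/-- If  and  lexicographically, then . -/
theorem Id_not_subset_of_mord_lexLt {n : ℕ} (d d' : Fin n → ℚ) (hd : Mord d)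
    (hd' : ∀ j, 0 < d' j) (hlt : lexLt d d') :
    ∃ a : Fin n → ℕ, 1 ≤ ∑ j, (a j : ℚ) / d j ∧ ∑ j, (a j : ℚ) / d' j < 1 :=
  Id_not_subset_of_mord_lexLt_general d d' hd hlt
end

section
/- If d = (d_1,...,d_n) is an increasing tuple of positive rationals not lying in Mord, then there exists a tuple d' = (d'_1,...,d'_n) of positive rationals with d' > d lexicographically such that I_d ⊆ I_{d'}. -/
/-!
Fix an index `i` at which the `Mord` condition fails: no `a` supported on `j ≤ i` with `a i ≠ 0` has
`∑ a_j / d_j = 1`. All sums `∑ a_j / d_j` lie in `(1/N)ℤ` for a suitable `N`, so those exceeding `1`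
are at least `r = 1 + 1/N`. Take `d'` equal to `d` before `i`, `d'_i = r d_i`, and `d'_j = 1` after
`i`. If some `a_j ≠ 0` with `j > i`, then already `a_j / d'_j ≥ 1`. Otherwise the sum changes only in
its `i`-th term: not at all if `a_i = 0`, and if `a_i ≠ 0` the sum was `≥ r` and is divided by at
most `r`.
-/

theorem exists_pos_nat_forall_mul_eq_intCast {ι : Type*} [Fintype ι] (q : ι → ℚ) :
    ∃ N : ℕ, 0 < N ∧ ∀ j, ∃ c : ℤ, N * q j = c := by
  refine ⟨∏ j, (q j).den, Finset.prod_pos fun j _ => (q j).den_pos, fun j => ?_⟩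
  obtain ⟨k, hk⟩ := Finset.dvd_prod_of_mem (fun j => (q j).den) (Finset.mem_univ j)
  refine ⟨k * (q j).num, ?_⟩
  rw [hk]
  push_cast
  rw [← Rat.den_mul_eq_num]
  ring

theorem exists_one_lt_forall_le_sum_div_of_one_lt {ι : Type*} [Fintype ι] (d : ι → ℚ) :
    ∃ r : ℚ, 1 < r ∧ ∀ a : ι → ℤ, 1 < ∑ j, (a j : ℚ) / d j → r ≤ ∑ j, (a j : ℚ) / d j := by
  obtain ⟨N, hN, hc⟩ := exists_pos_nat_forall_mul_eq_intCast fun j => (d j)⁻¹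
  choose c hc using hc
  have hNQ : (0 : ℚ) < N := by exact_mod_cast hN
  refine ⟨1 + (N : ℚ)⁻¹, by simpa using hN, fun a hS => ?_⟩
  set S := ∑ j, (a j : ℚ) / d j
  have hNS : N * S = (∑ j, a j * c j : ℤ) := by
    simp only [S, Finset.mul_sum, div_eq_mul_inv]
    push_cast
    refine Finset.sum_congr rfl fun j _ => ?_
    rw [← hc j]
    ring
  have hlt : (N : ℤ) < ∑ j, a j * c j := by
    have : (N : ℚ) < N * S := lt_mul_of_one_lt_right hNQ hS
    exact_mod_cast hNS ▸ this
  have hle : (N : ℚ) + 1 ≤ N * S := by rw [hNS]; exact_mod_cast hlt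
  rwa [← mul_le_mul_iff_right₀ hNQ, mul_add, mul_inv_cancel₀ hNQ.ne', mul_one]

section RaiseAt

variable {ι : Type*} [LinearOrder ι]

def raiseAt (d : ι → ℚ) (i : ι) (r : ℚ) (j : ι) : ℚ :=
  if j < i then d j else if j = i then d i * r else 1

variable {d : ι → ℚ} {i j : ι} {r : ℚ}

theorem raiseAt_of_lt (h : j < i) : raiseAt d i r j = d j := if_pos h

@[simp]
theorem raiseAt_self : raiseAt d i r i = d i * r := by simp [raiseAt]

theorem raiseAt_of_gt (h : i < j) : raiseAt d i r j = 1 := by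
  simp [raiseAt, h.not_gt, h.ne']

theorem raiseAt_pos (hd : ∀ j, 0 < d j) (hr : 0 < r) (j : ι) : 0 < raiseAt d i r j := by
  rcases lt_trichotomy j i with h | rfl | h
  · rw [raiseAt_of_lt h]; exact hd j
  · rw [raiseAt_self]; exact mul_pos (hd j) hr
  · rw [raiseAt_of_gt h]; exact one_pos

variable [Fintype ι] {a : ι → ℕ}

theorem one_le_sum_div_raiseAt_of_gt (hd : ∀ j, 0 < d j) (hr : 0 < r) (hij : i < j)
    (ha : a j ≠ 0) : 1 ≤ ∑ k, (a k : ℚ) / raiseAt d i r k :=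
  calc (1 : ℚ) ≤ a j / raiseAt d i r j := by
        rw [raiseAt_of_gt hij, div_one, Nat.one_le_cast]; exact Nat.one_le_iff_ne_zero.mpr ha
    _ ≤ ∑ k, (a k : ℚ) / raiseAt d i r k :=
        Finset.single_le_sum (fun k _ => div_nonneg (Nat.cast_nonneg _) (raiseAt_pos hd hr k).le)
          (Finset.mem_univ j)

theorem sum_div_raiseAt_eq_sum_div (hsupp : ∀ j, i < j → a j = 0) (hai : a i = 0) :
    ∑ k, (a k : ℚ) / raiseAt d i r k = ∑ k, (a k : ℚ) / d k := by
  refine Finset.sum_congr rfl fun k _ => ?_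
  rcases lt_trichotomy k i with h | rfl | h
  · rw [raiseAt_of_lt h]
  · simp [hai]
  · simp [hsupp k h]

theorem inv_mul_sum_div_le_sum_div_raiseAt (hd : ∀ j, 0 < d j) (hr : 1 ≤ r)
    (hsupp : ∀ j, i < j → a j = 0) :
    r⁻¹ * ∑ k, (a k : ℚ) / d k ≤ ∑ k, (a k : ℚ) / raiseAt d i r k := by
  rw [Finset.mul_sum]
  refine Finset.sum_le_sum fun k _ => ?_
  rcases lt_trichotomy k i with h | rfl | h
  · rw [raiseAt_of_lt h]
    exact mul_le_of_le_one_left (div_nonneg (Nat.cast_nonneg _) (hd k).le)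
      (inv_le_one_of_one_le₀ hr)
  · rw [raiseAt_self]
    exact le_of_eq (by ring)
  · simp [hsupp k h]

end RaiseAt

theorem exists_lex_gt_of_not_mord_general {n : ℕ} (d : Fin n → ℚ) (hpos : ∀ j, 0 < d j)
    (h : ¬ ∀ i : Fin n, ∃ a : Fin n → ℕ, a i ≠ 0 ∧ (∀ j, i < j → a j = 0) ∧
        ∑ j, (a j : ℚ) / d j = 1) :
    ∃ d' : Fin n → ℚ, (∀ j, 0 < d' j) ∧ lexLt d d' ∧
      ∀ a : Fin n → ℕ, 1 ≤ ∑ j, (a j : ℚ) / d j → 1 ≤ ∑ j, (a j : ℚ) / d' j := by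
  push Not at h
  obtain ⟨i, hi⟩ := h
  obtain ⟨r, hr, hgap⟩ := exists_one_lt_forall_le_sum_div_of_one_lt d
  have hr0 : 0 < r := one_pos.trans hr
  refine ⟨raiseAt d i r, raiseAt_pos hpos hr0,
    ⟨i, fun j hj => (raiseAt_of_lt hj).symm, ?_⟩, fun a ha => ?_⟩
  · rw [raiseAt_self]
    exact lt_mul_of_one_lt_right (hpos i) hr
  by_cases hsupp : ∀ j, i < j → a j = 0
  · by_cases hai : a i = 0
    · rwa [sum_div_raiseAt_eq_sum_div hsupp hai]
    have hS : r ≤ ∑ j, (a j : ℚ) / d j := by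
      simpa using hgap (fun j => a j) (by simpa using ha.lt_of_ne' (hi a hai hsupp))
    calc (1 : ℚ) ≤ r⁻¹ * ∑ j, (a j : ℚ) / d j := by rwa [le_inv_mul_iff₀ hr0, mul_one]
      _ ≤ _ := inv_mul_sum_div_le_sum_div_raiseAt hpos hr.le hsupp
  · push Not at hsupp
    obtain ⟨j, hij, haj⟩ := hsupp
    exact one_le_sum_div_raiseAt_of_gt hpos hr0 hij haj

/-- If an increasing tuple of positive rationals is not in , then 
for some lexicographically larger tuple . -/
theorem exists_lex_gt_of_not_mord {n : ℕ} (d : Fin n → ℚ) (hpos : ∀ j, 0 < d j)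
    (hmono : Monotone d)
    (h : ¬ ∀ i : Fin n, ∃ a : Fin n → ℕ, a i ≠ 0 ∧ (∀ j, i < j → a j = 0) ∧
        ∑ j, (a j : ℚ) / d j = 1) :
    ∃ d' : Fin n → ℚ, (∀ j, 0 < d' j) ∧ lexLt d d' ∧
      ∀ a : Fin n → ℕ, 1 ≤ ∑ j, (a j : ℚ) / d j → 1 ≤ ∑ j, (a j : ℚ) / d' j :=
  exists_lex_gt_of_not_mord_general d hpos h
end

section
/- Every d = (d_1,...,d_n) ∈ Mord lies in Q_1; that is, the numbers e_1,...,e_n defined recursively by e_i = d_i · ∏_{j=1}^{i-1} (e_j - 1)! are all positive integers. -/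
/-!
Put `N_k = ∏_{j<k} (e_j - 1)!`, so that `e_j = d_j N_j`, fix a representation
`∑_{j≤i} a_j / d_j = 1` with `a_i ≠ 0`, and let `T_k = 1 - ∑_{j<k} a_j / d_j`, which is positive
for `k ≤ i`. Inductively `N_k = M T_k` for a natural number `M`: from `T_{k+1} M e_k = N_k c` with
`c = e_k - a_k M`, the integer `c` lies in `(0, e_k]`, so `c ∣ e_k!` and
`N_{k+1} = N_k (e_k - 1)! = (M e_k! / c) T_{k+1}`. At `k = i` we have `T_i = a_i / d_i`, hence
`e_i = d_i N_i = M a_i`.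
-/

open Finset
open scoped Nat

lemma exists_nat_mul_factorial_eq_mul_sub_div {N T d : ℚ} {M e a : ℕ} (hN : 0 < N) (hd : 0 < d)
    (he : (e : ℚ) = d * N) (hM : N = M * T) (hT : 0 < T - a / d) :
    ∃ M' : ℕ, N * (e - 1)! = M' * (T - a / d) := by
  have he0 : e ≠ 0 := by
    have : (0 : ℚ) < e := he ▸ mul_pos hd hN
    exact_mod_cast this.ne'
  have hM0 : (0 : ℚ) < M :=
    Nat.cast_pos.2 (Nat.pos_of_ne_zero (by rintro rfl; simp [hN.ne'] at hM))
  have hkey : (T - a / d) * (M * e) = N * (e - a * M) := by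
    rw [he, hM]; field_simp
  have hlt : a * M < e := by
    have : (0 : ℚ) < e - a * M := pos_of_mul_pos_right (hkey ▸ by positivity) hN.le
    exact_mod_cast sub_pos.1 this
  obtain ⟨q, hq⟩ := Nat.dvd_factorial (Nat.sub_pos_of_lt hlt) (Nat.sub_le e (a * M))
  have hfact : (e : ℚ) * (e - 1)! = (e - a * M : ℕ) * q := by
    exact_mod_cast (Nat.mul_factorial_pred he0).trans hq
  refine ⟨M * q, mul_right_cancel₀ (mul_ne_zero (Nat.cast_ne_zero.2 he0)
    (Nat.cast_ne_zero.2 (Nat.sub_pos_of_lt hlt).ne')) ?_⟩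
  push_cast [hlt.le] at hfact ⊢
  linear_combination (N * (e - a * M)) * hfact - q * (e - a * M) * hkey

theorem exists_prod_factorial_eq_mul_one_sub_sum {ι : Type*} [LinearOrder ι] {d : ι → ℚ}
    {e a : ι → ℕ} (s : Finset ι) (hd : ∀ j ∈ s, 0 < d j)
    (he : ∀ j ∈ s, (e j : ℚ) = d j * ∏ l ∈ s with l < j, ((e l - 1)! : ℚ))
    (hs : 0 < 1 - ∑ j ∈ s, (a j : ℚ) / d j) :
    ∃ M : ℕ, ∏ j ∈ s, ((e j - 1)! : ℚ) = M * (1 - ∑ j ∈ s, (a j : ℚ) / d j) := by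
  induction s using Finset.induction_on_max with
  | empty => exact ⟨1, by simp⟩
  | insert m s hlt ih =>
    have hm : m ∉ s := fun h => (hlt m h).false
    have hfilter_self : (insert m s).filter (· < m) = s := by
      ext j; simp only [mem_filter, mem_insert]
      exact ⟨fun h => h.1.resolve_left h.2.ne, fun h => ⟨Or.inr h, hlt j h⟩⟩
    have hfilter : ∀ j ∈ s, (insert m s).filter (· < j) = s.filter (· < j) := by
      intro j hj
      rw [filter_insert, if_neg (hlt j hj).not_gt]
    rw [sum_insert hm] at hs
    have hdm := hd m (mem_insert_self m s)
    obtain ⟨M, hM⟩ := ih (fun j hj => hd j (mem_insert_of_mem hj))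
      (fun j hj => hfilter j hj ▸ he j (mem_insert_of_mem hj))
      (hs.trans_le (sub_le_sub_left (le_add_of_nonneg_left (by positivity)) 1))
    have hem := he m (mem_insert_self m s)
    rw [hfilter_self] at hem
    obtain ⟨M', hM'⟩ := exists_nat_mul_factorial_eq_mul_sub_div
      (prod_pos fun j _ => by positivity) hdm hem hM (by rwa [sub_sub, add_comm])
    exact ⟨M', by rw [prod_insert hm, sum_insert hm, mul_comm, hM']; ring⟩

lemma Mord.exists_pos_natCast_eq_mul_prod {n : ℕ} {d : Fin n → ℚ} (hd : Mord d) (i : Fin n)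
    {e : Fin n → ℕ} (he : ∀ j < i, (e j : ℚ) = d j * ∏ l ∈ Iio j, ((e l - 1)! : ℚ)) :
    ∃ m : ℕ, 0 < m ∧ (m : ℚ) = d i * ∏ j ∈ Iio i, ((e j - 1)! : ℚ) := by
  obtain ⟨hpos, -, hrep⟩ := hd
  obtain ⟨a, hai, hagt, hsum⟩ := hrep i
  have htail : 1 - ∑ j ∈ Iio i, (a j : ℚ) / d j = a i / d i := by
    rw [← hsum, ← sum_subset (subset_univ (Iic i)), ← Iio_insert, sum_insert notMem_Iio_self]
    · ring
    · intro j _ hj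
      rw [hagt j (not_le.1 (mem_Iic.not.1 hj)), Nat.cast_zero, zero_div]
  have hai' : (0 : ℚ) < a i := by exact_mod_cast Nat.pos_of_ne_zero hai
  obtain ⟨M, hM⟩ := exists_prod_factorial_eq_mul_one_sub_sum (a := a) (Iio i)
    (fun j _ => hpos j)
    (fun j hj => by rw [Iio_filter_lt, min_eq_right (mem_Iio.1 hj).le]; exact he j (mem_Iio.1 hj))
    (htail ▸ div_pos hai' (hpos i))
  rw [htail] at hM
  have hM0 : M ≠ 0 := by
    rintro rfl
    exact (prod_pos fun j _ => by positivity : (0 : ℚ) < ∏ j ∈ Iio i, ((e j - 1)! : ℚ)).ne'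
      (by simpa using hM)
  refine ⟨M * a i, Nat.mul_pos (Nat.pos_of_ne_zero hM0) (Nat.pos_of_ne_zero hai), ?_⟩
  rw [hM]
  push_cast
  field_simp [(hpos i).ne']

-- `⌊·⌋₊` is exact once the argument is known to be a natural number (`Mord.q1Seq_spec`).
noncomputable def q1Seq {n : ℕ} (d : Fin n → ℚ) (i : Fin n) : ℕ :=
  ⌊d i * ∏ j ∈ (Iio i).attach, ((q1Seq d j - 1)! : ℚ)⌋₊
termination_by i
decreasing_by exact Fin.lt_def.1 (mem_Iio.1 j.2)

lemma q1Seq_eq {n : ℕ} (d : Fin n → ℚ) (i : Fin n) :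
    q1Seq d i = ⌊d i * ∏ j ∈ Iio i, ((q1Seq d j - 1)! : ℚ)⌋₊ := by
  rw [q1Seq, prod_attach (Iio i) fun j => ((q1Seq d j - 1)! : ℚ)]

lemma Mord.q1Seq_spec {n : ℕ} {d : Fin n → ℚ} (hd : Mord d) (i : Fin n) :
    0 < q1Seq d i ∧ (q1Seq d i : ℚ) = d i * ∏ j ∈ Iio i, ((q1Seq d j - 1)! : ℚ) := by
  induction i using WellFoundedLT.induction with
  | _ i ih =>
    obtain ⟨m, hm, hmeq⟩ := hd.exists_pos_natCast_eq_mul_prod i fun j hj => (ih j hj).2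
    have : q1Seq d i = m := by rw [q1Seq_eq, ← hmeq, Nat.floor_natCast]
    exact this ▸ ⟨hm, hmeq⟩

/-- `Mord ⊆ Q₁`: the numbers `e_i = d_i ∏_{j<i} (e_j - 1)!` are positive integers. -/
theorem mord_subset_Q1 {n : ℕ} (d : Fin n → ℚ) (hd : Mord d) :
    ∃ e : Fin n → ℕ, (∀ i, 0 < e i) ∧
      ∀ i, (e i : ℚ) = d i * ∏ j ∈ Finset.univ.filter (· < i),
        ((e j - 1).factorial : ℚ) := by
  refine ⟨q1Seq d, fun i => (hd.q1Seq_spec i).1, fun i => ?_⟩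
  rw [filter_gt_eq_Iio]
  exact (hd.q1Seq_spec i).2
end

section
/- For each fixed n, the set Mord_n of tuples in Mord of length n, ordered lexicographically, is well-ordered: every nonempty subset has a least element (equivalently, there is no strictly decreasing infinite sequence in Mord_n). -/
/-!
Fix the first `i` coordinates `d₁, …, d_i` of a tuple in `Mord`. Every sum
`∑_{j ≤ i} a_j / d_j` with natural `a_j` lies in `(1/N)ℕ`, where `N` is the product of the
numerators of the `d_j`. Hence in `a_{i+1} / d_{i+1} = 1 - ∑_{j ≤ i} a_j / d_j` the right-hand
side is `r / N` with `0 < r ≤ N`, so `d_{i+1} = a_{i+1} N / r` lies in `(1/N!)ℕ`. The possible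
next coordinates thus form a well-ordered set, and a lexicographically least element is found
coordinate by coordinate.
-/

open Finset
open scoped Nat

theorem exists_min_lexLt_of_isWF {n : ℕ} (S : Set (Fin n → ℚ)) (hne : S.Nonempty)
    (hwf : ∀ (i : Fin n), ∀ m ∈ S, ((· i) '' {d ∈ S | ∀ j < i, d j = m j}).IsWF) :
    ∃ m ∈ S, ∀ d ∈ S, ¬ lexLt d m := by
  suffices h : ∀ i ≤ n, ∃ m ∈ S, ∀ d ∈ S, ∀ k : Fin n, k.val < i →
      (∀ j < k, d j = m j) → ¬ d k < m k by
    obtain ⟨m, hmS, hmin⟩ := h n le_rfl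
    exact ⟨m, hmS, fun d hd ⟨k, hagree, hlt⟩ => hmin d hd k k.isLt hagree hlt⟩
  intro i
  induction i with
  | zero =>
    obtain ⟨m, hm⟩ := hne
    exact fun _ => ⟨m, hm, fun _ _ _ hk => absurd hk (Nat.not_lt_zero _)⟩
  | succ i ih =>
    intro hi
    obtain ⟨m, hmS, hmin⟩ := ih (by omega)
    set i' : Fin n := ⟨i, hi⟩
    set T := {d ∈ S | ∀ j < i', d j = m j}
    have hV : ((· i') '' T).Nonempty := ⟨m i', m, ⟨hmS, fun _ _ => rfl⟩, rfl⟩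
    obtain ⟨d₀, ⟨hd₀S, hd₀m⟩, hd₀⟩ := (hwf i' m hmS).min_mem hV
    refine ⟨d₀, hd₀S, fun d hd k hk hagree hlt => ?_⟩
    rcases Nat.lt_succ_iff_lt_or_eq.mp hk with hk | hk
    · have hki : k < i' := hk
      refine hmin d hd k hk (fun j hj => ?_) (hd₀m k hki ▸ hlt)
      rw [hagree j hj, hd₀m j (hj.trans hki)]
    · obtain rfl : k = i' := Fin.ext hk
      have hdT : d ∈ T := ⟨hd, fun j hj => (hagree j hj).trans (hd₀m j hj)⟩
      exact (hwf i' m hmS).not_lt_min hV ⟨d, hdT, rfl⟩ (hd₀ ▸ hlt)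

theorem Rat.exists_nat_div_mul_eq (a : ℕ) {q : ℚ} (hq : 0 < q) {N : ℕ}
    (hN : q.num.natAbs ∣ N) : ∃ c : ℕ, a / q * N = c := by
  obtain ⟨t, rfl⟩ := hN
  have hnum : (q.num.natAbs : ℚ) = q * q.den := by
    rw [Nat.cast_natAbs, abs_of_pos (Rat.num_pos.mpr hq), Rat.mul_den_eq_num]
  refine ⟨a * q.den * t, ?_⟩
  push_cast
  rw [hnum]
  field_simp

theorem exists_nat_mul_factorial_eq {d : ℚ} (hd : 0 < d) {a N k : ℕ} (ha : a ≠ 0) (hN : 0 < N)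
    (h : a / d * N + k = N) : ∃ c : ℕ, d * N ! = c := by
  have hpos : (0 : ℚ) < a / d * N := by positivity
  have hkN : k < N := by exact_mod_cast (show (k : ℚ) < N by linarith)
  obtain ⟨M, hM⟩ := Nat.dvd_factorial (Nat.sub_pos_of_lt hkN) (Nat.sub_le N k)
  refine ⟨a * N * M, ?_⟩
  rw [hM]
  have hr : (N : ℚ) - k = a / d * N := by linarith
  push_cast [Nat.cast_sub hkN.le]
  rw [← mul_assoc, hr]
  field_simp

theorem Rat.isWF_of_forall_exists_nat_mul_eq {s : Set ℚ} {L : ℕ} (hL : 0 < L)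
    (h : ∀ x ∈ s, ∃ c : ℕ, x * L = c) : s.IsWF := by
  refine (Set.isPWO_of_wellQuasiOrderedLE Set.univ |>.image_of_monotone
    (f := fun c : ℕ => (c : ℚ) / L) fun a b hab => by dsimp only; gcongr).isWF.mono ?_
  intro x hx
  obtain ⟨c, hc⟩ := h x hx
  refine ⟨c, trivial, ?_⟩
  dsimp only
  rw [← hc]
  field_simp

theorem Mord.exists_nat_mul_eq_of_eq_below {n : ℕ} {m : Fin n → ℚ} (hm : Mord m) (i : Fin n) :
    ∃ L : ℕ, 0 < L ∧
      ∀ d, Mord d → (∀ j < i, d j = m j) → ∃ c : ℕ, d i * L = c := by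
  classical
  set N := ∏ j ∈ univ.filter (· < i), (m j).num.natAbs
  have hN : 0 < N := prod_pos fun j _ => Int.natAbs_pos.mpr (Rat.num_ne_zero.mpr (hm.1 j).ne')
  refine ⟨N !, N.factorial_pos, fun d hd hdm => ?_⟩
  obtain ⟨a, hai, ha, hsum⟩ := hd.2.2 i
  have hterm : ∀ j ∈ univ.erase i,
      (a j : ℚ) / d j * N ∈ AddMonoidHom.mrange (Nat.castAddMonoidHom ℚ) := by
    intro j hj
    rcases lt_or_gt_of_ne (ne_of_mem_erase hj) with hji | hij
    · rw [hdm j hji]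
      have hdvd : (m j).num.natAbs ∣ N :=
        dvd_prod_of_mem (fun j => (m j).num.natAbs) (by simpa using hji)
      obtain ⟨c, hc⟩ := Rat.exists_nat_div_mul_eq (a j) (hm.1 j) hdvd
      exact ⟨c, hc.symm⟩
    · exact ⟨0, by simp [ha j hij]⟩
  obtain ⟨k, hk⟩ := sum_mul (univ.erase i) _ (N : ℚ) ▸ sum_mem hterm
  refine exists_nat_mul_factorial_eq (hd.1 i) hai hN (k := k) ?_
  rw [← add_sum_erase _ _ (mem_univ i)] at hsum
  simp only [Nat.coe_castAddMonoidHom] at hk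
  linear_combination (N : ℚ) * hsum + hk

/-- `Mord_n` is well-ordered for the lexicographic order: every nonempty subset has a
least element. -/
theorem mord_wellOrdered {n : ℕ} (S : Set (Fin n → ℚ)) (hS : ∀ d ∈ S, Mord d)
    (hne : S.Nonempty) : ∃ m ∈ S, ∀ d ∈ S, ¬ lexLt d m := by
  refine exists_min_lexLt_of_isWF S hne fun i m hm => ?_
  obtain ⟨L, hL, hdiscrete⟩ := (hS m hm).exists_nat_mul_eq_of_eq_below i
  refine Rat.isWF_of_forall_exists_nat_mul_eq hL ?_
  rintro _ ⟨d, ⟨hd, hdm⟩, rfl⟩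
  exact hdiscrete d (hS d hd) hdm
end
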